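/- arXiv:1210.4658 — 2 statements merged into one kernel-verified Lean document; each statement's English description precedes it below -/
import Mathlib

section
/- Let x be a unit vector in C^n, V a subspace of C^n, and define sin∠(V, x) = ‖(I - P_V)x‖. Let u, ũ be vectors not in V, V₊ = V ⊕ span{(I - P_V)u} and Ṽ₊ = V ⊕ span{(I - P_V)ũ}, δ = sin∠(V₊, x)/sin∠(V, x), δ̃ = sin∠(Ṽ₊, x)/sin∠(V, x), and ε̃ = ‖(I - P_V)(ũ - u)‖/‖(I - P_V)u‖. Assume sin∠(V, x) ≠ 0 and δ > 0. Then |δ - δ̃|/δ ≤ 2ε̃/δ. -/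
/-!
With `r = (I - P_V) x` and `p = (I - P_V) u`, the vector `p` is orthogonal to `V`, so
`(I - P_{V₊}) x = (I - P_p) r`: both `δ` and `δ̃` are distances from `r` to a line, divided by `‖r‖`.
For unit vectors `e`, `f`, comparing with the point `⟪e, r⟫ • f` of the line `𝕜 ∙ f` shows that
these distances differ by at most `‖r‖ ‖e - f‖`. Normalising `p` and `p̃` costs the factor `2`:
`‖p / ‖p‖ - p̃ / ‖p̃‖‖ ≤ 2 ‖p̃ - p‖ / ‖p‖`.
-/

open scoped InnerProductSpace

section NormedSpace

variable {𝕜 F : Type*} [RCLike 𝕜] [NormedAddCommGroup F] [NormedSpace 𝕜 F]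

theorem norm_inv_norm_smul_sub_inv_norm_smul_le {p q : F} (hp : p ≠ 0) (hq : q ≠ 0) :
    ‖(‖p‖⁻¹ : 𝕜) • p - (‖q‖⁻¹ : 𝕜) • q‖ ≤ 2 * ‖q - p‖ / ‖p‖ := by
  have hsplit : (‖p‖⁻¹ : 𝕜) • p - (‖q‖⁻¹ : 𝕜) • q =
      (‖p‖⁻¹ : 𝕜) • ((p - q) + ((‖q‖ - ‖p‖ : ℝ) : 𝕜) • (‖q‖⁻¹ : 𝕜) • q) := by
    have hp' : (‖p‖ : 𝕜) ≠ 0 := by exact_mod_cast norm_ne_zero_iff.2 hp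
    have hq' : (‖q‖ : 𝕜) ≠ 0 := by exact_mod_cast norm_ne_zero_iff.2 hq
    rw [smul_add, smul_sub, smul_smul, smul_smul]
    match_scalars <;> field_simp
    ring
  calc ‖(‖p‖⁻¹ : 𝕜) • p - (‖q‖⁻¹ : 𝕜) • q‖
      = ‖p‖⁻¹ * ‖(p - q) + ((‖q‖ - ‖p‖ : ℝ) : 𝕜) • (‖q‖⁻¹ : 𝕜) • q‖ := by
        rw [hsplit, norm_smul, norm_inv, RCLike.norm_ofReal, abs_norm]
    _ ≤ ‖p‖⁻¹ * (‖p - q‖ + |‖q‖ - ‖p‖|) := by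
        gcongr
        refine (norm_add_le _ _).trans ?_
        rw [norm_smul, norm_smul_inv_norm hq, RCLike.norm_ofReal, mul_one]
    _ ≤ ‖p‖⁻¹ * (‖p - q‖ + ‖q - p‖) := by gcongr; exact abs_norm_sub_norm_le q p
    _ = 2 * ‖q - p‖ / ‖p‖ := by rw [norm_sub_rev]; ring

end NormedSpace

variable {𝕜 E : Type*} [RCLike 𝕜] [NormedAddCommGroup E] [InnerProductSpace 𝕜 E]

namespace Submodule

theorem sub_starProjection_sup_of_le_orthogonal {V K : Submodule 𝕜 E}
    [V.HasOrthogonalProjection] [K.HasOrthogonalProjection] [(V ⊔ K).HasOrthogonalProjection]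
    (hK : K ≤ Vᗮ) (x : E) :
    x - (V ⊔ K).starProjection x =
      (x - V.starProjection x) - K.starProjection (x - V.starProjection x) := by
  have hr : x - V.starProjection x ∈ Vᗮ := sub_starProjection_mem_orthogonal x
  suffices (V ⊔ K).starProjection x =
      V.starProjection x + K.starProjection (x - V.starProjection x) by
    rw [this, sub_add_eq_sub_sub]
  refine eq_starProjection_of_mem_orthogonal
    (add_mem_sup (starProjection_apply_mem V x) (starProjection_apply_mem K _)) ?_
  rw [← sub_sub, ← inf_orthogonal, mem_inf]
  exact ⟨sub_mem hr (hK (starProjection_apply_mem K _)), sub_starProjection_mem_orthogonal _⟩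

variable (𝕜) in
theorem norm_sub_starProjection_span_le_of_norm_eq_one {e : E} (he : ‖e‖ = 1) (f r : E) :
    ‖r - (𝕜 ∙ f).starProjection r‖ ≤ ‖r - (𝕜 ∙ e).starProjection r‖ + ‖r‖ * ‖e - f‖ := by
  set c := ⟪e, r⟫_𝕜
  have hc : ‖c‖ ≤ ‖r‖ := by simpa [he] using norm_inner_le_norm (𝕜 := 𝕜) e r
  have hmin : ‖r - (𝕜 ∙ f).starProjection r‖ ≤ ‖r - c • f‖ := by
    rw [starProjection_minimal]
    exact ciInf_le (f := fun y : 𝕜 ∙ f => ‖r - y‖) ⟨0, by rintro _ ⟨y, rfl⟩; positivity⟩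
      ⟨c • f, smul_mem _ c (mem_span_singleton_self f)⟩
  calc ‖r - (𝕜 ∙ f).starProjection r‖ ≤ ‖r - c • f‖ := hmin
    _ = ‖(r - c • e) + c • (e - f)‖ := by rw [smul_sub, sub_add_sub_cancel]
    _ ≤ ‖r - c • e‖ + ‖c‖ * ‖e - f‖ := (norm_add_le _ _).trans_eq (by rw [norm_smul])
    _ ≤ ‖r - (𝕜 ∙ e).starProjection r‖ + ‖r‖ * ‖e - f‖ := by
      rw [starProjection_unit_singleton 𝕜 he]
      gcongr

variable (𝕜) in
theorem abs_norm_sub_starProjection_span_sub_le_of_norm_eq_one {e f : E} (he : ‖e‖ = 1)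
    (hf : ‖f‖ = 1) (r : E) :
    |‖r - (𝕜 ∙ e).starProjection r‖ - ‖r - (𝕜 ∙ f).starProjection r‖| ≤ ‖r‖ * ‖e - f‖ := by
  rw [abs_sub_le_iff]
  constructor
  · have := norm_sub_starProjection_span_le_of_norm_eq_one 𝕜 hf e r
    rw [norm_sub_rev f e] at this
    linarith
  · linarith [norm_sub_starProjection_span_le_of_norm_eq_one 𝕜 he f r]

variable (𝕜) in
theorem abs_norm_sub_starProjection_span_sub_le {p q : E} (hp : p ≠ 0) (hq : q ≠ 0) (r : E) :
    |‖r - (𝕜 ∙ p).starProjection r‖ - ‖r - (𝕜 ∙ q).starProjection r‖| ≤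
      ‖r‖ * (2 * ‖q - p‖ / ‖p‖) := by
  have hspan {v : E} (hv : v ≠ 0) : (𝕜 ∙ (‖v‖⁻¹ : 𝕜) • v) = 𝕜 ∙ v :=
    span_singleton_smul_eq (Ne.isUnit (by simpa using hv)) v
  have h := abs_norm_sub_starProjection_span_sub_le_of_norm_eq_one 𝕜
    (norm_smul_inv_norm (𝕜 := 𝕜) hp) (norm_smul_inv_norm (𝕜 := 𝕜) hq) r
  simp only [hspan hp, hspan hq] at h
  refine h.trans ?_
  gcongr
  exact norm_inv_norm_smul_sub_inv_norm_smul_le hp hq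

end Submodule

theorem subspace_expansion_bound_general (n : ℕ)
    (V : Submodule ℂ (EuclideanSpace ℂ (Fin n)))
    (x u utilde : EuclideanSpace ℂ (Fin n))
    (hu : u - (Submodule.orthogonalProjectionOnto V u : EuclideanSpace ℂ (Fin n)) ≠ 0)
    (hut : utilde - (Submodule.orthogonalProjectionOnto V utilde : EuclideanSpace ℂ (Fin n)) ≠ 0)
    (Vplus Vtplus : Submodule ℂ (EuclideanSpace ℂ (Fin n)))
    (hVplus : Vplus = V ⊔ (ℂ ∙ (u - (Submodule.orthogonalProjectionOnto V u : EuclideanSpace ℂ (Fin n)))))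
    (hVtplus : Vtplus =
      V ⊔ (ℂ ∙ (utilde - (Submodule.orthogonalProjectionOnto V utilde : EuclideanSpace ℂ (Fin n)))))
    (δ δt εt : ℝ)
    (hδ : δ = ‖x - (Submodule.orthogonalProjectionOnto Vplus x : EuclideanSpace ℂ (Fin n))‖ /
      ‖x - (Submodule.orthogonalProjectionOnto V x : EuclideanSpace ℂ (Fin n))‖)
    (hδt : δt = ‖x - (Submodule.orthogonalProjectionOnto Vtplus x : EuclideanSpace ℂ (Fin n))‖ /
      ‖x - (Submodule.orthogonalProjectionOnto V x : EuclideanSpace ℂ (Fin n))‖)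
    (hεt : εt = ‖(utilde - (Submodule.orthogonalProjectionOnto V utilde : EuclideanSpace ℂ (Fin n))) -
        (u - (Submodule.orthogonalProjectionOnto V u : EuclideanSpace ℂ (Fin n)))‖ /
      ‖u - (Submodule.orthogonalProjectionOnto V u : EuclideanSpace ℂ (Fin n))‖) :
    |δ - δt| / δ ≤ 2 * εt / δ := by
  simp only [← Submodule.starProjection_apply] at *
  subst hVplus hVtplus hδ hδt hεt
  have hspan (v : EuclideanSpace ℂ (Fin n)) : (ℂ ∙ (v - V.starProjection v)) ≤ Vᗮ :=
    (Submodule.span_singleton_le_iff_mem _ _).2 (V.sub_starProjection_mem_orthogonal v)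
  have hdiff := Submodule.abs_norm_sub_starProjection_span_sub_le ℂ hu hut (x - V.starProjection x)
  rw [← Submodule.sub_starProjection_sup_of_le_orthogonal (hspan u),
    ← Submodule.sub_starProjection_sup_of_le_orthogonal (hspan utilde)] at hdiff
  refine div_le_div_of_nonneg_right ?_ (by positivity)
  rw [div_sub_div_same, abs_div, abs_norm]
  exact div_le_of_le_mul₀ (norm_nonneg _) (by positivity) (hdiff.trans_eq (by ring))

/-- One-step subspace expansion comparison: with `V₊ = V ⊕ span{(I-P_V)u}` and
`Ṽ₊ = V ⊕ span{(I-P_V)ũ}`, `δ = sin∠(V₊,x)/sin∠(V,x)`, `δ̃ = sin∠(Ṽ₊,x)/sin∠(V,x)`,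
`ε̃ = ‖(I-P_V)(ũ-u)‖/‖(I-P_V)u‖`, one has `|δ - δ̃|/δ ≤ 2ε̃/δ`. -/
theorem subspace_expansion_bound (n : ℕ)
    (V : Submodule ℂ (EuclideanSpace ℂ (Fin n)))
    (x u utilde : EuclideanSpace ℂ (Fin n)) (hx : ‖x‖ = 1)
    (hu : u - (Submodule.orthogonalProjectionOnto V u : EuclideanSpace ℂ (Fin n)) ≠ 0)
    (hut : utilde - (Submodule.orthogonalProjectionOnto V utilde : EuclideanSpace ℂ (Fin n)) ≠ 0)
    (Vplus Vtplus : Submodule ℂ (EuclideanSpace ℂ (Fin n)))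
    (hVplus : Vplus = V ⊔ (ℂ ∙ (u - (Submodule.orthogonalProjectionOnto V u : EuclideanSpace ℂ (Fin n)))))
    (hVtplus : Vtplus =
      V ⊔ (ℂ ∙ (utilde - (Submodule.orthogonalProjectionOnto V utilde : EuclideanSpace ℂ (Fin n)))))
    (hsin : ‖x - (Submodule.orthogonalProjectionOnto V x : EuclideanSpace ℂ (Fin n))‖ ≠ 0)
    (δ δt εt : ℝ)
    (hδ : δ = ‖x - (Submodule.orthogonalProjectionOnto Vplus x : EuclideanSpace ℂ (Fin n))‖ /
      ‖x - (Submodule.orthogonalProjectionOnto V x : EuclideanSpace ℂ (Fin n))‖)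
    (hδt : δt = ‖x - (Submodule.orthogonalProjectionOnto Vtplus x : EuclideanSpace ℂ (Fin n))‖ /
      ‖x - (Submodule.orthogonalProjectionOnto V x : EuclideanSpace ℂ (Fin n))‖)
    (hεt : εt = ‖(utilde - (Submodule.orthogonalProjectionOnto V utilde : EuclideanSpace ℂ (Fin n))) -
        (u - (Submodule.orthogonalProjectionOnto V u : EuclideanSpace ℂ (Fin n)))‖ /
      ‖u - (Submodule.orthogonalProjectionOnto V u : EuclideanSpace ℂ (Fin n))‖)
    (hδpos : 0 < δ) :
    |δ - δt| / δ ≤ 2 * εt / δ :=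
  subspace_expansion_bound_general n V x u utilde hu hut Vplus Vtplus hVplus hVtplus δ δt εt hδ hδt
    hεt
end

section
/- Let A be an n×n complex matrix, σ not an eigenvalue of A, B = (A - σI)^{-1}, and V a subspace of C^n. A pair (ν, y) with nonzero y ∈ V and ν ≠ σ satisfies (A - νI)y ⊥ (A - σI)V if and only if (B - (1/(ν-σ))I) w ⊥ W for w = (A - σI)y ∈ W := (A - σI)V; that is, the harmonic Ritz pairs of A with respect to V and target σ correspond exactly to the standard Ritz pairs of B with respect to the subspace (A - σI)V under the eigenvalue map ν ↦ 1/(ν - σ). -/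
open Matrix

/-- Harmonic Ritz pairs of `A` w.r.t. `𝒱` and target `σ` correspond to standard Ritz
pairs of `B = (A - σI)⁻¹` w.r.t. `W = (A - σI)𝒱` under `ν ↦ 1/(ν - σ)`: with
`w = (A - σI)y ∈ W`, the condition `(A - νI)y ⊥ (A - σI)𝒱` holds iff
`(B - (1/(ν-σ))I)w ⊥ W`. -/
theorem harmonic_ritz_shift_invert_correspondence (n : ℕ)
    (A : Matrix (Fin n) (Fin n) ℂ) (σ : ℂ) (hσ : IsUnit (A - σ • 1))
    (B : Matrix (Fin n) (Fin n) ℂ) (hB : B = (A - σ • 1)⁻¹)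
    (𝒱 : Submodule ℂ (Fin n → ℂ)) (y : Fin n → ℂ) (hy𝒱 : y ∈ 𝒱) (hy : y ≠ 0)
    (ν : ℂ) (hν : ν ≠ σ)
    (W : Submodule ℂ (Fin n → ℂ)) (hW : W = 𝒱.map (Matrix.mulVecLin (A - σ • 1))) :
    (A - σ • 1).mulVec y ∈ W ∧
    ((∀ v ∈ 𝒱, star ((A - σ • 1).mulVec v) ⬝ᵥ ((A - ν • 1).mulVec y) = 0) ↔
      (∀ w' ∈ W, star w' ⬝ᵥ
        (B.mulVec ((A - σ • 1).mulVec y) - (ν - σ)⁻¹ • ((A - σ • 1).mulVec y)) = 0)) := by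
  subst hW
  have hdet : IsUnit (A - σ • 1).det := (Matrix.isUnit_iff_isUnit_det _).mp hσ
  have hBy : B.mulVec ((A - σ • 1).mulVec y) = y := by
    rw [hB, Matrix.mulVec_mulVec, Matrix.nonsing_inv_mul _ hdet, Matrix.one_mulVec]
  have hνσ : ν - σ ≠ 0 := sub_ne_zero.mpr hν
  have hAν : (A - ν • 1).mulVec y = (A - σ • 1).mulVec y - (ν - σ) • y := by
    have : A - ν • 1 = (A - σ • 1) - (ν - σ) • 1 := by
      rw [sub_smul]; abel
    rw [this, Matrix.sub_mulVec, Matrix.smul_mulVec, Matrix.one_mulVec]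
  have hBside : B.mulVec ((A - σ • 1).mulVec y) - (ν - σ)⁻¹ • ((A - σ • 1).mulVec y)
      = (-(ν - σ)⁻¹) • ((A - σ • 1).mulVec y - (ν - σ) • y) := by
    rw [hBy, smul_sub, smul_smul, neg_mul, inv_mul_cancel₀ hνσ]
    module
  refine ⟨⟨y, hy𝒱, rfl⟩, ?_⟩
  constructor
  · rintro h w' ⟨v, hv, rfl⟩
    have := h v hv
    rw [hAν] at this
    simp only [Matrix.mulVecLin_apply, hBside, dotProduct_smul, this, smul_zero]
  · intro h v hv
    have := h ((A - σ • 1).mulVec v) ⟨v, hv, rfl⟩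
    rw [hBside, dotProduct_smul, smul_eq_mul, mul_eq_zero] at this
    rcases this with h0 | h0
    · exact absurd h0 (by simpa using inv_ne_zero hνσ)
    · rw [hAν]; exact h0
end
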